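/- Let P be a finite poset, G its incomparability graph, and T a P-tableau whose shape is a hook. Then the orientation of G defined by directing each edge {u,v} of G from u to v whenever the column of T containing u lies strictly to the right of the column containing v is well defined (adjacent vertices of G never lie in the same column of T) and is an acyclic orientation of G. -/

import Mathlib

open Finset

/-! ### Basic poset / graph notions -/

/-- Two elements of a poset are incomparable. -/
def Incomp {P : Type*} [PartialOrder P] (x y : P) : Prop := ¬ x ≤ y ∧ ¬ y ≤ x

/-- The incomparability graph of a poset. -/
def incompGraph (P : Type*) [PartialOrder P] : SimpleGraph P where
  Adj x y := Incomp x y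
  symm := ⟨fun _ _ h => ⟨h.2, h.1⟩⟩
  loopless := ⟨fun _ h => h.1 le_rfl⟩

/-- A poset is (3+1)-free if no induced subposet is the disjoint union of a
3-element chain and a 1-element chain. -/
def ThreeOneFree (P : Type*) [PartialOrder P] : Prop :=
  ¬ ∃ a b c x : P, a < b ∧ b < c ∧ Incomp a x ∧ Incomp b x ∧ Incomp c x

/-- A graph is clawfree if it has no induced `K_{1,3}`. -/
def Clawfree {V : Type*} (G : SimpleGraph V) : Prop :=
  ¬ ∃ c a b x : V, a ≠ b ∧ a ≠ x ∧ b ≠ x ∧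
    G.Adj c a ∧ G.Adj c b ∧ G.Adj c x ∧ ¬ G.Adj a b ∧ ¬ G.Adj a x ∧ ¬ G.Adj b x

/-! ### Orientations -/

/-- An orientation of a simple graph: each edge receives exactly one direction. -/
structure GraphOrientation {V : Type*} (G : SimpleGraph V) where
  dir : V → V → Prop
  dir_adj : ∀ u v, dir u v → G.Adj u v
  total : ∀ u v, G.Adj u v → (dir u v ↔ ¬ dir v u)

/-- An orientation is acyclic if it has no directed cycles. -/
def GraphOrientation.Acyclic {V : Type*} {G : SimpleGraph V} (o : GraphOrientation G) : Prop :=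
  ∀ v, ¬ Relation.TransGen o.dir v v

/-- A sink of an orientation: a vertex with no outgoing edges. -/
def GraphOrientation.IsSink {V : Type*} {G : SimpleGraph V} (o : GraphOrientation G) (v : V) : Prop :=
  ∀ u, ¬ o.dir v u

/-- The number of acyclic orientations of `G` with exactly `l` sinks. -/
noncomputable def numAcyclicOrientations {V : Type*} (G : SimpleGraph V) (l : ℕ) : ℕ :=
  Nat.card {o : GraphOrientation G // o.Acyclic ∧ Nat.card {v : V // o.IsSink v} = l}

/-! ### Symmetric functions as formal power series in `x_0, x_1, x_2, …` -/

/-- A proper coloring of a graph with colors in `ℕ`. -/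
def IsProperColoring {V : Type*} (G : SimpleGraph V) (κ : V → ℕ) : Prop :=
  ∀ u v, G.Adj u v → κ u ≠ κ v

/-- The chromatic symmetric function of a graph, as a formal power series:
the coefficient of the monomial `m` is the number of proper colorings of content `m`. -/
noncomputable def chromSymFun {V : Type*} [Fintype V] [DecidableEq V] (G : SimpleGraph V) :
    MvPowerSeries ℕ ℚ :=
  fun m => (Nat.card {κ : V → ℕ // IsProperColoring G κ ∧
      ∀ i : ℕ, Nat.card {v : V // κ v = i} = m i} : ℚ)

/-- The elementary symmetric function `e_k` as a power series. -/
noncomputable def esymmPS (k : ℕ) : MvPowerSeries ℕ ℚ :=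
  fun m => if (∀ i ∈ m.support, m i = 1) ∧ m.support.card = k then 1 else 0

/-- The elementary symmetric function `e_λ` attached to a partition. -/
noncomputable def elemPS {d : ℕ} (lam : Nat.Partition d) : MvPowerSeries ℕ ℚ :=
  (lam.parts.map esymmPS).prod

/-- The content of a semistandard Young tableau: the number of cells with entry `i`. -/
noncomputable def ssytContent {μ : YoungDiagram} (T : SemistandardYoungTableau μ) (i : ℕ) : ℕ :=
  Nat.card {c : ℕ × ℕ // c ∈ μ ∧ T c.1 c.2 = i}

/-- The Schur function `s_μ` as a power series: the coefficient of the monomial `m` is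
the number of semistandard Young tableaux of shape `μ` and content `m`. -/
noncomputable def schurPS (μ : YoungDiagram) : MvPowerSeries ℕ ℚ :=
  fun m => (Nat.card {T : SemistandardYoungTableau μ // ∀ i, ssytContent T i = m i} : ℚ)

/-- The Kostka number `K_{μ,ν}`: the number of semistandard Young tableaux
of shape `μ` and content the sequence `ν` (given as a list). -/
noncomputable def kostka (μ : YoungDiagram) (ν : List ℕ) : ℕ :=
  Nat.card {T : SemistandardYoungTableau μ // ∀ i, ssytContent T i = ν.getD i 0}

/-- The Young diagram of a partition. -/
def Nat.Partition.toYoung {d : ℕ} (lam : Nat.Partition d) : YoungDiagram :=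
  YoungDiagram.ofRowLens (lam.parts.sort (· ≥ ·)) (List.sortedGE_iff_pairwise.2 (lam.parts.pairwise_sort _))

/-- The hook-shaped Young diagram with `d` cells in total,
`k` of which lie in the first column. -/
def hookDiagram (d k : ℕ) : YoungDiagram :=
  YoungDiagram.ofRowLens ((d - k + 1) :: List.replicate (k - 1) 1) (by
    refine List.sortedGE_iff_pairwise.2 (List.pairwise_cons.2 ⟨?_, ?_⟩)
    · intro b hb
      rw [List.mem_replicate] at hb
      omega
    · exact List.pairwise_replicate.2 (Or.inr le_rfl))

/-! ### P-tableaux -/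

/-- A `P`-tableau of shape `μ` (Chow's convention): a filling of the cells of `μ` by the
elements of `P`, each used exactly once, strictly increasing down columns, and such that
an entry is never greater than its right neighbour. -/
structure PTableau (P : Type*) [PartialOrder P] (μ : YoungDiagram) where
  entry : ℕ → ℕ → P
  bijOn : Set.BijOn (fun c : ℕ × ℕ => entry c.1 c.2) ↑μ.cells Set.univ
  col_lt : ∀ i j, (i, j) ∈ μ → (i + 1, j) ∈ μ → entry i j < entry (i + 1) j
  row_not_gt : ∀ i j, (i, j) ∈ μ → (i, j + 1) ∈ μ → ¬ entry i (j + 1) < entry i j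

/-! ### Rim hooks and special rim hook tabloids -/

/-- Two cells are edgewise adjacent. -/
def CellAdj (a b : ℕ × ℕ) : Prop :=
  (a.1 = b.1 ∧ (a.2 = b.2 + 1 ∨ b.2 = a.2 + 1)) ∨
  (a.2 = b.2 ∧ (a.1 = b.1 + 1 ∨ b.1 = a.1 + 1))

/-- A rim hook (border strip): a nonempty, edgewise connected set of cells
containing no 2×2 square. -/
def IsRimHook (S : Finset (ℕ × ℕ)) : Prop :=
  S.Nonempty ∧
  (∀ a ∈ S, ∀ b ∈ S, Relation.ReflTransGen (fun x y => x ∈ S ∧ y ∈ S ∧ CellAdj x y) a b) ∧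
  ∀ i j : ℕ, ¬ ((i, j) ∈ S ∧ (i + 1, j) ∈ S ∧ (i, j + 1) ∈ S ∧ (i + 1, j + 1) ∈ S)

/-- A rim hook is special if it contains a cell in the first column. -/
def IsSpecial (S : Finset (ℕ × ℕ)) : Prop := ∃ i, (i, 0) ∈ S

/-- `PeelSeq μ L`: the rim hooks in the list `L` can be successively removed from `μ`,
each intermediate residue being a Young diagram, ending with the empty diagram. -/
def PeelSeq : YoungDiagram → List (Finset (ℕ × ℕ)) → Prop
  | μ, [] => μ.cells = ∅
  | μ, S :: L => ∃ ν : YoungDiagram,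
      S ⊆ μ.cells ∧ ν.cells = μ.cells \ S ∧ IsRimHook S ∧ IsSpecial S ∧ PeelSeq ν L

/-- A special rim hook tabloid of shape `μ`: a decomposition of the cells of `μ` into
disjoint special rim hooks which can be removed in some order, each intermediate residue
being a Young diagram. -/
structure SpecialRimHookTabloid (μ : YoungDiagram) where
  hooks : Finset (Finset (ℕ × ℕ))
  peelable : ∃ L : List (Finset (ℕ × ℕ)), L.Nodup ∧ L.toFinset = hooks ∧ PeelSeq μ L

/-- The height of a rim hook: the number of rows it meets. -/
def hookHeight (S : Finset (ℕ × ℕ)) : ℕ := (S.image Prod.fst).card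

/-- The sign of a special rim hook tabloid. -/
noncomputable def SpecialRimHookTabloid.sign {μ : YoungDiagram}
    (T : SpecialRimHookTabloid μ) : ℤ :=
  ∏ S ∈ T.hooks, (-1 : ℤ) ^ (hookHeight S - 1)

/-- A special rim hook tabloid has type `λ` if the multiset of sizes of its rim hooks
is the multiset of parts of `λ`. -/
def SpecialRimHookTabloid.HasType {μ : YoungDiagram} (T : SpecialRimHookTabloid μ)
    {d : ℕ} (lam : Nat.Partition d) : Prop :=
  T.hooks.val.map Finset.card = lam.parts

/-! Entries in one column of a `P`-tableau form a chain, so incomparable elements sit in different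
columns; and orienting edges along a strictly decreasing column index cannot close a cycle. -/

theorem Relation.TransGen.rank_lt {α β : Type*} [Preorder β] {r : α → α → Prop} (f : α → β)
    (hr : ∀ a b, r a b → f b < f a) {a b : α} (h : Relation.TransGen r a b) : f b < f a := by
  have := h.lift (p := (· > ·)) f hr
  rwa [Relation.transGen_eq_self] at this

def GraphOrientation.ofRank {V α : Type*} [LinearOrder α] (G : SimpleGraph V) (f : V → α)
    (hf : ∀ u v, G.Adj u v → f u ≠ f v) : GraphOrientation G where
  dir u v := G.Adj u v ∧ f v < f u
  dir_adj _ _ h := h.1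
  total u v huv := by
    constructor
    · rintro ⟨-, hvu⟩ ⟨-, huv'⟩
      exact lt_asymm hvu huv'
    · exact fun h => ⟨huv, (hf u v huv).lt_or_gt.resolve_left fun hlt => h ⟨huv.symm, hlt⟩⟩

theorem GraphOrientation.ofRank_acyclic {V α : Type*} [LinearOrder α] (G : SimpleGraph V)
    (f : V → α) (hf : ∀ u v, G.Adj u v → f u ≠ f v) : (GraphOrientation.ofRank G f hf).Acyclic :=
  fun _ h => lt_irrefl _ (h.rank_lt f fun _ _ hab => hab.2)

namespace PTableau

variable {P : Type*} [PartialOrder P] {μ : YoungDiagram}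

theorem entry_lt_entry_of_lt (T : PTableau P μ) {i i' j : ℕ} (hii' : i < i')
    (hi' : (i', j) ∈ μ) : T.entry i j < T.entry i' j := by
  induction i', hii' using Nat.le_induction with
  | base => exact T.col_lt i j (μ.up_left_mem (Nat.le_succ i) le_rfl hi') hi'
  | succ n _ ih =>
    have hn : (n, j) ∈ μ := μ.up_left_mem (Nat.le_succ n) le_rfl hi'
    exact (ih hn).trans (T.col_lt n j hn hi')

theorem not_incomp_entry_of_same_column (T : PTableau P μ) {i i' j : ℕ} (hi : (i, j) ∈ μ)
    (hi' : (i', j) ∈ μ) : ¬ Incomp (T.entry i j) (T.entry i' j) := by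
  rintro ⟨hle, hge⟩
  rcases lt_trichotomy i i' with h | rfl | h
  · exact hle (T.entry_lt_entry_of_lt h hi').le
  · exact hle le_rfl
  · exact hge (T.entry_lt_entry_of_lt h hi).le

theorem exists_mem_entry_eq (T : PTableau P μ) (p : P) :
    ∃ i j, (i, j) ∈ μ ∧ T.entry i j = p := by
  obtain ⟨⟨i, j⟩, hc, hp⟩ := T.bijOn.surjOn (Set.mem_univ p)
  exact ⟨i, j, hc, hp⟩

theorem col_ne_of_incomp (T : PTableau P μ) (col : P → ℕ)
    (hcol : ∀ i j, (i, j) ∈ μ → col (T.entry i j) = j) {u v : P} (huv : Incomp u v) :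
    col u ≠ col v := by
  obtain ⟨i, j, hi, rfl⟩ := T.exists_mem_entry_eq u
  obtain ⟨i', j', hi', rfl⟩ := T.exists_mem_entry_eq v
  rw [hcol i j hi, hcol i' j' hi']
  rintro rfl
  exact T.not_incomp_entry_of_same_column hi hi' huv

end PTableau

theorem hook_PTableau_induces_acyclic_orientation_general
    {P : Type} [PartialOrder P] (d k : ℕ)
    (T : PTableau P (hookDiagram d k)) (col : P → ℕ)
    (hcol : ∀ i j, (i, j) ∈ hookDiagram d k → col (T.entry i j) = j) :
    (∀ u v, (incompGraph P).Adj u v → col u ≠ col v) ∧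
    (∀ v, ¬ Relation.TransGen
        (fun u w => (incompGraph P).Adj u w ∧ col w < col u) v v) ∧
    (∃ o : GraphOrientation (incompGraph P),
      (∀ u v, o.dir u v ↔ (incompGraph P).Adj u v ∧ col v < col u) ∧ o.Acyclic) := by
  have hne : ∀ u v, (incompGraph P).Adj u v → col u ≠ col v :=
    fun _ _ => T.col_ne_of_incomp col hcol
  have hacyc := GraphOrientation.ofRank_acyclic (incompGraph P) col hne
  exact ⟨hne, hacyc, GraphOrientation.ofRank _ col hne, fun _ _ => Iff.rfl, hacyc⟩

/-- Let `P` be a finite poset, `G` its incomparability graph, and `T` a `P`-tableau of hook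
shape.  Directing each edge `{u,v}` of `G` from `u` to `v` whenever the column containing `u`
lies strictly to the right of the column containing `v` is well defined (adjacent vertices
never lie in the same column) and yields an acyclic orientation of `G`. -/
theorem hook_PTableau_induces_acyclic_orientation
    {P : Type} [PartialOrder P] [Fintype P] (d k : ℕ)
    (T : PTableau P (hookDiagram d k)) (col : P → ℕ)
    (hcol : ∀ i j, (i, j) ∈ hookDiagram d k → col (T.entry i j) = j) :
    (∀ u v, (incompGraph P).Adj u v → col u ≠ col v) ∧
    (∀ v, ¬ Relation.TransGen
        (fun u w => (incompGraph P).Adj u w ∧ col w < col u) v v) ∧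
    (∃ o : GraphOrientation (incompGraph P),
      (∀ u v, o.dir u v ↔ (incompGraph P).Adj u v ∧ col v < col u) ∧ o.Acyclic) :=
  hook_PTableau_induces_acyclic_orientation_general d k T col hcol
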